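/- With the setup of the previous extension result: if p is an ultrafilter on the Boolean algebra B of subsets of Y and f : Y → C is B-definable into the compact Hausdorff space C, then the intersection ⋂_{Y' ∈ p} closure(f(Y')) is a singleton. -/

import Mathlib

/-- `B` is a Boolean algebra of subsets of `α`. -/
def IsBoolAlgOn {α : Type*} (B : Set (Set α)) : Prop :=
  Set.univ ∈ B ∧ (∀ A ∈ B, Aᶜ ∈ B) ∧ ∀ A ∈ B, ∀ A' ∈ B, A ∩ A' ∈ B

/-- `p` is an ultrafilter on the Boolean algebra `B` of subsets. -/
def IsUltraOn {α : Type*} (B p : Set (Set α)) : Prop :=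
  p ⊆ B ∧ Set.univ ∈ p ∧ ∅ ∉ p ∧ (∀ Y ∈ p, ∀ Z ∈ p, Y ∩ Z ∈ p) ∧
    (∀ Y ∈ p, ∀ Z ∈ B, Y ⊆ Z → Z ∈ p) ∧ ∀ Y ∈ B, Y ∈ p ∨ Yᶜ ∈ p

/-- The Stone space of the Boolean algebra `B`: the set of ultrafilters on `B`. -/
abbrev StoneS {α : Type*} (B : Set (Set α)) : Type _ := {p : Set (Set α) // IsUltraOn B p}

/-- The Stone topology, generated by the basic (cl)open sets `{p : A ∈ p}`, `A ∈ B`. -/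
instance stoneTop {α : Type*} (B : Set (Set α)) : TopologicalSpace (StoneS B) :=
  TopologicalSpace.generateFrom {U | ∃ A ∈ B, U = {p : StoneS B | A ∈ p.1}}

/-- `f : α → C` is `B`-definable: preimages of disjoint closed sets are separated by a
member of `B`. -/
def BDefinable {α C : Type*} [TopologicalSpace C] (B : Set (Set α)) (f : α → C) : Prop :=
  ∀ C₁ C₂ : Set C, IsClosed C₁ → IsClosed C₂ → Disjoint C₁ C₂ →
    ∃ A ∈ B, f ⁻¹' C₁ ⊆ A ∧ A ∩ f ⁻¹' C₂ = ∅

/-!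
The sets `closure (f '' A)`, `A ∈ p`, are nonempty, closed and closed under finite
intersections, so by compactness their intersection is nonempty. Two distinct points
`c ≠ c'` have disjoint closed neighbourhoods `K ∋ c`, `K' ∋ c'`; definability yields
`A ∈ B` with `f⁻¹' K ⊆ A` and `A ∩ f⁻¹' K' = ∅`, so `c'` avoids `closure (f '' A)` and
`c` avoids `closure (f '' Aᶜ)`. As `p` contains `A` or `Aᶜ`, the two points cannot both
lie in the intersection.
-/

open Set Topology

namespace IsUltraOn

variable {α : Type*} {B p : Set (Set α)}

theorem nonempty_of_mem (hp : IsUltraOn B p) {A : Set α} (hA : A ∈ p) : A.Nonempty :=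
  nonempty_iff_ne_empty.2 fun h => hp.2.2.1 (h ▸ hA)

theorem nonempty_biInter_closure_image {C : Type*} [TopologicalSpace C] [CompactSpace C]
    (hp : IsUltraOn B p) (f : α → C) : (⋂ A ∈ p, closure (f '' A)).Nonempty := by
  have : Nonempty p := ⟨⟨univ, hp.2.1⟩⟩
  rw [biInter_eq_iInter]
  refine IsCompact.nonempty_iInter_of_directed_nonempty_isCompact_isClosed _ ?_
    (fun A => ((hp.nonempty_of_mem A.2).image f).closure)
    (fun _ => isClosed_closure.isCompact) (fun _ => isClosed_closure)
  rintro ⟨A, hA⟩ ⟨A', hA'⟩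
  exact ⟨⟨A ∩ A', hp.2.2.2.1 A hA A' hA'⟩,
    closure_mono (image_mono inter_subset_left), closure_mono (image_mono inter_subset_right)⟩

end IsUltraOn

theorem notMem_closure_of_disjoint_mem_nhds {X : Type*} [TopologicalSpace X] {s K : Set X}
    {x : X} (hK : K ∈ 𝓝 x) (hsK : Disjoint s K) : x ∉ closure s := fun hx =>
  (mem_closure_iff_nhds.1 hx K hK).ne_empty (disjoint_iff_inter_eq_empty.1 hsK.symm)

theorem BDefinable.exists_separating {α C : Type*} [TopologicalSpace C] [T3Space C]
    {B : Set (Set α)} {f : α → C} (hf : BDefinable B f) {c c' : C} (hne : c ≠ c') :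
    ∃ A ∈ B, c ∉ closure (f '' Aᶜ) ∧ c' ∉ closure (f '' A) := by
  obtain ⟨K, ⟨hK, hKcl⟩, K', ⟨hK', hK'cl⟩, hKK'⟩ :=
    ((closed_nhds_basis c).disjoint_iff (closed_nhds_basis c')).1 (disjoint_nhds_nhds.2 hne)
  obtain ⟨A, hAB, hKA, hAK'⟩ := hf K K' hKcl hK'cl hKK'
  refine ⟨A, hAB, notMem_closure_of_disjoint_mem_nhds hK ?_,
    notMem_closure_of_disjoint_mem_nhds hK' ?_⟩
  · rw [disjoint_image_left]
    exact disjoint_compl_left_iff_subset.2 hKA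
  · rw [disjoint_image_left]
    exact disjoint_iff_inter_eq_empty.2 hAK'

theorem stmt_12_general {α C : Type*} [TopologicalSpace C] [CompactSpace C] [T2Space C]
    (B : Set (Set α))
    (p : Set (Set α)) (hp : IsUltraOn B p)
    (f : α → C) (hf : BDefinable B f) :
    ∃ c : C, ⋂ A ∈ p, closure (f '' A) = {c} := by
  obtain ⟨c, hc⟩ := hp.nonempty_biInter_closure_image f
  refine ⟨c, eq_singleton_iff_unique_mem.2 ⟨hc, fun c' hc' => ?_⟩⟩
  by_contra hne
  obtain ⟨A, hAB, hcA, hc'A⟩ := hf.exists_separating (Ne.symm hne)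
  rcases hp.2.2.2.2.2 A hAB with hA | hA
  · exact hc'A (mem_iInter₂.1 hc' A hA)
  · exact hcA (mem_iInter₂.1 hc Aᶜ hA)

/-- For an ultrafilter `p` on `B` and a `B`-definable map `f` into a compact Hausdorff
space, the intersection `⋂_{A ∈ p} closure (f '' A)` is a singleton. -/
theorem stmt_12 {α C : Type*} [TopologicalSpace C] [CompactSpace C] [T2Space C]
    (B : Set (Set α)) (hB : IsBoolAlgOn B)
    (p : Set (Set α)) (hp : IsUltraOn B p)
    (f : α → C) (hf : BDefinable B f) :
    ∃ c : C, ⋂ A ∈ p, closure (f '' A) = {c} :=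
  stmt_12_general B p hp f hf
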